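/- arXiv:1206.0185 — 2 statements merged into one kernel-verified Lean document; each statement's English description precedes it below -/
import Mathlib

section
/- If G is a finite non-nilpotent group, then there exists an abnormal maximal subgroup M of G such that F̃(G) is not contained in M. -/
/-!
Pass to `G/Φ(G)`, which has trivial Frattini subgroup and is still non-nilpotent. In a finite
group a non-normal maximal subgroup `M` is abnormal: `⟨M, M^x⟩` is `M` or `G`, and `M^x = M`
puts `x` in `N_G(M) = M`. So it suffices to find a non-normal maximal subgroup of `G/Φ(G)` not
containing its socle, whose preimage is `F̃(G)`. If every non-normal maximal subgroup contained the socle, then for a minimal normal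
subgroup `N` the commutators `[G, N] ≤ N` would lie in every maximal subgroup (a normal maximal
subgroup has abelian quotient), hence in `Φ = 1`: every minimal normal subgroup would be central.
But a group with `Φ = 1` whose minimal normal subgroups are central is nilpotent, by induction:
a maximal subgroup `M` avoiding a minimal normal `N` satisfies `G = Z(G) M`, so `M` is normal,
`Φ(M) = 1`, the minimal normal subgroups of `M` are minimal normal in `G`, and `G/Z(G)` is a
quotient of the nilpotent group `M`.
-/

open scoped Pointwise

section Defs

variable {G : Type*} [Group G]

/-- The conjugate `H^x = x⁻¹ H x` of a subgroup `H` of `G`. -/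
def conjS (x : G) (H : Subgroup G) : Subgroup G :=
  H.map (MulAut.conj x⁻¹).toMonoidHom

/-- A subgroup `H` of `G` is `R`-conjugate-permutable (for a subset `R ⊆ G`) if
`H · H^x = H^x · H` as subsets of `G`, for all `x ∈ R`. -/
def IsRCP (R : Set G) (H : Subgroup G) : Prop :=
  ∀ x ∈ R, (H : Set G) * (conjS x H : Set G) = (conjS x H : Set G) * (H : Set G)

/-- A subgroup `H` of `G` is conjugate-permutable if `H · H^x = H^x · H` for all `x ∈ G`. -/
def IsConjPermutable (H : Subgroup G) : Prop :=
  IsRCP (Set.univ : Set G) H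

/-- `N` is a minimal normal subgroup of `G`. -/
def IsMinimalNormal (N : Subgroup G) : Prop :=
  N.Normal ∧ N ≠ ⊥ ∧ ∀ K : Subgroup G, K.Normal → K ≤ N → K = ⊥ ∨ K = N

/-- `H` is an abnormal subgroup of `G`: `x ∈ ⟨H, H^x⟩` for all `x ∈ G`. -/
def IsAbnormal (H : Subgroup G) : Prop :=
  ∀ x : G, x ∈ H ⊔ conjS x H

/-- `H` is normal in the subgroup `K` of `G`. -/
def IsNormalIn (H K : Subgroup G) : Prop :=
  H ≤ K ∧ ∀ x ∈ K, ∀ h ∈ H, x * h * x⁻¹ ∈ H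

/-- `H` is subnormal in the subgroup `K`: there is a chain
`H = H₀ ◁ H₁ ◁ ⋯ ◁ Hₙ = K` with each term normal in the next. -/
def IsSubnormalIn (H K : Subgroup G) : Prop :=
  ∃ (n : ℕ) (s : Fin (n + 1) → Subgroup G),
    s 0 = H ∧ s (Fin.last n) = K ∧
    ∀ i : Fin n, s i.castSucc ≤ s i.succ ∧
      ∀ x ∈ s i.succ, ∀ h ∈ s i.castSucc, x * h * x⁻¹ ∈ s i.castSucc

/-- `H` is pronormal in the subgroup `K`: for every `x ∈ K`, the subgroups `H` and `H^x`
are conjugate in `⟨H, H^x⟩`. -/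
def IsPronormalIn (H K : Subgroup G) : Prop :=
  H ≤ K ∧ ∀ x ∈ K, ∃ k ∈ H ⊔ conjS x H, conjS k H = conjS x H

end Defs

/-- The socle of `G`: the subgroup generated by all minimal normal subgroups of `G`. -/
def socle' (G : Type*) [Group G] : Subgroup G :=
  sSup {N : Subgroup G | IsMinimalNormal N}

/-- `F̃(G)`: the subgroup of `G` containing the Frattini subgroup `Φ(G)` with
`F̃(G)/Φ(G) = Soc(G/Φ(G))`. -/
def Ftilde (G : Type*) [Group G] : Subgroup G :=
  (socle' (G ⧸ frattini G)).comap (QuotientGroup.mk' (frattini G))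

/-- The Fitting subgroup `F(G)`: the largest normal nilpotent subgroup of `G`
(the subgroup generated by all normal nilpotent subgroups). -/
def Fitting (G : Type*) [Group G] : Subgroup G :=
  sSup {N : Subgroup G | N.Normal ∧ Group.IsNilpotent N}

section FittingNormal

variable {G : Type*} [Group G]

lemma map_conj_eq_self {N : Subgroup G} (hN : N.Normal) (g : G) :
    N.map (MulAut.conj g).toMonoidHom = N := by
  ext x
  simp only [Subgroup.mem_map, MulEquiv.coe_toMonoidHom, MulAut.conj_apply]
  constructor
  · rintro ⟨n, hn, rfl⟩; exact hN.conj_mem n hn g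
  · intro hx
    refine ⟨g⁻¹ * x * g, by simpa using hN.conj_mem x hx g⁻¹, by group⟩

instance Fitting_normal (G : Type*) [Group G] : (Fitting G).Normal := by
  constructor
  intro n hn g
  have h1 : (Fitting G).map (MulAut.conj g).toMonoidHom = Fitting G := by
    unfold Fitting
    rw [sSup_eq_iSup, Subgroup.map_iSup]
    refine iSup_congr fun N => ?_
    rw [Subgroup.map_iSup]
    exact iSup_congr_Prop Iff.rfl fun hN => map_conj_eq_self hN.1 g
  rw [← h1]
  exact Subgroup.mem_map.2 ⟨n, hn, rfl⟩

end FittingNormal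

/-- The generalized Fitting subgroup `F*(G)`: the subgroup containing `F(G)` with
`F*(G)/F(G) = Soc(C_G(F(G))·F(G)/F(G))`. -/
def FStar (G : Type*) [Group G] : Subgroup G :=
  Subgroup.comap (QuotientGroup.mk' (Fitting G))
    (Subgroup.map
      ((Subgroup.centralizer (Fitting G : Set G) ⊔ Fitting G).map
          (QuotientGroup.mk' (Fitting G))).subtype
      (socle' ((Subgroup.centralizer (Fitting G : Set G) ⊔ Fitting G).map
          (QuotientGroup.mk' (Fitting G)))))

/-- A group is supersoluble if it has a normal series all of whose terms are
normal in the whole group and all of whose factors are cyclic; the factor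
`s (i+1) / s i` being cyclic is expressed by `s (i+1) ≤ s i ⊔ ⟨g⟩` for some `g`. -/
def IsSupersoluble (G : Type*) [Group G] : Prop :=
  ∃ (n : ℕ) (s : Fin (n + 1) → Subgroup G),
    Monotone s ∧ s 0 = ⊥ ∧ s (Fin.last n) = ⊤ ∧ (∀ i, (s i).Normal) ∧
    ∀ i : Fin n, ∃ g : G, s i.succ ≤ s i.castSucc ⊔ Subgroup.zpowers g

/-- A group is metanilpotent if it has a normal nilpotent subgroup with
nilpotent quotient. -/
def IsMetanilpotent (G : Type*) [Group G] : Prop :=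
  ∃ (N : Subgroup G) (hN : N.Normal),
    Group.IsNilpotent N ∧
      @Group.IsNilpotent (G ⧸ N) (@QuotientGroup.Quotient.group G _ N hN)

section Conjugates

variable {G : Type*} [Group G]

lemma mem_conjS {x y : G} {H : Subgroup G} : y ∈ conjS x H ↔ x * y * x⁻¹ ∈ H := by
  simp only [conjS, Subgroup.mem_map, MulEquiv.coe_toMonoidHom, MulAut.conj_apply]
  exact ⟨by rintro ⟨h, hh, rfl⟩; simpa [mul_assoc] using hh,
    fun hy => ⟨x * y * x⁻¹, hy, by group⟩⟩

lemma conjS_eq_self_iff {x : G} {H : Subgroup G} :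
    conjS x H = H ↔ x ∈ Subgroup.normalizer (H : Set G) := by
  rw [Subgroup.mem_normalizer_iff, SetLike.ext_iff]
  exact forall_congr' fun y => by rw [mem_conjS]; exact Iff.comm

lemma card_conjS (x : G) (H : Subgroup G) : Nat.card (conjS x H) = Nat.card H :=
  Subgroup.card_map_of_injective (MulAut.conj x⁻¹).injective

lemma IsCoatom.isAbnormal_of_not_normal [Finite G] {M : Subgroup G} (hM : IsCoatom M)
    (hMn : ¬ M.Normal) : IsAbnormal M := by
  intro x
  rcases hM.le_iff.mp (le_sup_left : M ≤ M ⊔ conjS x M) with htop | hsup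
  · exact htop ▸ Subgroup.mem_top x
  have hconj : conjS x M = M :=
    Subgroup.eq_of_le_of_card_ge (le_sup_right.trans hsup.le) (card_conjS x M).ge
  have hnorm : Subgroup.normalizer (M : Set G) = M :=
    (hM.le_iff.mp M.le_normalizer).resolve_left
      fun h => hMn (Subgroup.normalizer_eq_top_iff.mp h)
  exact Subgroup.mem_sup_left (hnorm ▸ conjS_eq_self_iff.mp hconj)

end Conjugates

section Frattini

variable {G : Type*} [Group G]

lemma mem_frattini_iff {x : G} :
    x ∈ frattini G ↔ ∀ M : Subgroup G, IsCoatom M → x ∈ M := by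
  simp [frattini, Order.radical, Subgroup.mem_iInf]

lemma exists_isCoatom_not_le_of_not_le_frattini {N : Subgroup G} (hN : ¬ N ≤ frattini G) :
    ∃ M : Subgroup G, IsCoatom M ∧ ¬ N ≤ M := by
  by_contra! h
  exact hN fun x hx => mem_frattini_iff.mpr fun M hM => h M hM hx

lemma map_subtype_frattini_le_frattini [Finite G] (K : Subgroup G) [K.Normal] :
    (frattini K).map K.subtype ≤ frattini G := by
  set F := (frattini K).map K.subtype
  have hFK : F ≤ K := Subgroup.map_subtype_le _
  by_contra hF
  obtain ⟨V, hV, hFV⟩ := exists_isCoatom_not_le_of_not_le_frattini hF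
  have hsup : F ⊔ V = ⊤ := hV.2 _ (right_lt_sup.mpr hFV)
  -- Dedekind: `K = F ⊔ (V ⊓ K)`, so `V ⊓ K` together with `Φ(K)` generates `K`.
  have hgen : V.subgroupOf K ⊔ frattini K = ⊤ := by
    rw [eq_top_iff]
    rintro ⟨k, hk⟩ -
    obtain ⟨f, hf, v, hv, rfl⟩ :=
      Subgroup.mem_sup_of_normal_left.mp (hsup ▸ Subgroup.mem_top k)
    obtain ⟨f', hf', rfl⟩ := hf
    have hvK : v ∈ K := by simpa using K.mul_mem (K.inv_mem f'.2) hk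
    have : (⟨K.subtype f' * v, hk⟩ : K) = f' * ⟨v, hvK⟩ := rfl
    rw [this]
    exact mul_mem (Subgroup.mem_sup_right hf') (Subgroup.mem_sup_left hv)
  exact hFV (hFK.trans (Subgroup.subgroupOf_eq_top.mp (frattini_nongenerating hgen)))

lemma frattini_eq_bot_of_normal [Finite G] (hG : frattini G = ⊥) (K : Subgroup G) [K.Normal] :
    frattini K = ⊥ := by
  have := map_subtype_frattini_le_frattini K
  rwa [hG, le_bot_iff, Subgroup.map_eq_bot_iff_of_injective _ K.subtype_injective] at this

end Frattini

section Quotient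

variable {G H : Type*} [Group G] [Group H]

lemma Subgroup.isCoatom_map_of_ker_le {f : G →* H} (hf : Function.Surjective f)
    {M : Subgroup G} (hker : f.ker ≤ M) (hM : IsCoatom M) : IsCoatom (M.map f) := by
  have hcomap : (M.map f).comap f = M := Subgroup.comap_map_eq_self hker
  refine ⟨fun htop => hM.1 (by rw [← hcomap, htop, Subgroup.comap_top]), fun T hT => ?_⟩
  have hlt : M < T.comap f := hcomap ▸ (Subgroup.comap_lt_comap_of_surjective hf).mpr hT
  rw [← Subgroup.map_comap_eq_self_of_surjective hf T, hM.2 _ hlt]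
  exact Subgroup.map_top_of_surjective f hf

lemma frattini_quotient_frattini_eq_bot : frattini (G ⧸ frattini G) = ⊥ := by
  set π := QuotientGroup.mk' (frattini G)
  have hsurj : Function.Surjective π := QuotientGroup.mk'_surjective _
  rw [eq_bot_iff]
  intro x hx
  obtain ⟨g, rfl⟩ := hsurj x
  rw [Subgroup.mem_bot, QuotientGroup.mk'_apply, QuotientGroup.eq_one_iff]
  refine mem_frattini_iff.mpr fun M hM => ?_
  have hker : π.ker ≤ M := (QuotientGroup.ker_mk' _).le.trans (frattini_le_coatom hM)
  have hmap := mem_frattini_iff.mp hx _ (Subgroup.isCoatom_map_of_ker_le hsurj hker hM)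
  rwa [← Subgroup.mem_comap, Subgroup.comap_map_eq_self hker] at hmap

lemma Group.IsNilpotent.of_quotient_frattini [Finite G]
    (hQ : Group.IsNilpotent (G ⧸ frattini G)) : Group.IsNilpotent G := by
  refine ((Group.isNilpotent_of_finite_tfae (G := G)).out 0 2).mpr fun M hM => ?_
  have hker : (QuotientGroup.mk' (frattini G)).ker ≤ M :=
    (QuotientGroup.ker_mk' _).le.trans (frattini_le_coatom hM)
  have hQmax := (Group.isNilpotent_of_finite_tfae (G := G ⧸ frattini G)).out 0 2
  have hnormal := hQmax.mp hQ _
    (Subgroup.isCoatom_map_of_ker_le (QuotientGroup.mk'_surjective _) hker hM)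
  simpa only [Subgroup.comap_map_eq_self hker] using hnormal.comap (QuotientGroup.mk' _)

end Quotient

section MinimalNormal

variable {G : Type*} [Group G]

lemma exists_isMinimalNormal [Finite G] [Nontrivial G] :
    ∃ N : Subgroup G, IsMinimalNormal N := by
  obtain ⟨N, ⟨hNn, hNb⟩, hmin⟩ :=
    (Set.toFinite {N : Subgroup G | N.Normal ∧ N ≠ ⊥}).exists_minimal
      ⟨⊤, inferInstance, top_ne_bot⟩
  refine ⟨N, hNn, hNb, fun K hKn hKN => or_iff_not_imp_left.mpr fun hKb => ?_⟩
  exact le_antisymm hKN (hmin ⟨hKn, hKb⟩ hKN)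

lemma normal_of_le_normalizer_of_center_sup_eq_top {K M : Subgroup G}
    (hK : M ≤ Subgroup.normalizer (K : Set G)) (hM : Subgroup.center G ⊔ M = ⊤) : K.Normal :=
  Subgroup.normalizer_eq_top_iff.mp
    (top_le_iff.mp (hM ▸ sup_le (Subgroup.center_le_normalizer _) hK))

lemma isMinimalNormal_map_subtype_of_center_sup_eq_top {M : Subgroup G}
    (hM : Subgroup.center G ⊔ M = ⊤) {K : Subgroup M} (hK : IsMinimalNormal K) :
    IsMinimalNormal (K.map M.subtype) := by
  obtain ⟨hKn, hKb, hKmin⟩ := hK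
  refine ⟨normal_of_le_normalizer_of_center_sup_eq_top ?_ hM, ?_, fun L hLn hLK => ?_⟩
  · simpa [Subgroup.normalizer_eq_top_iff.mpr hKn, ← MonoidHom.range_eq_map] using
      Subgroup.le_normalizer_map (H := K) M.subtype
  · rwa [Ne, Subgroup.map_eq_bot_iff_of_injective _ M.subtype_injective]
  have hLM : L ≤ M := hLK.trans (Subgroup.map_subtype_le K)
  have hLmap : (L.subgroupOf M).map M.subtype = L := Subgroup.map_subgroupOf_eq_of_le hLM
  have hLK' : L.subgroupOf M ≤ K := by
    rw [← Subgroup.map_le_map_iff_of_injective M.subtype_injective, hLmap]; exact hLK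
  rcases hKmin _ (hLn.subgroupOf M) hLK' with h | h
  · exact Or.inl (by rw [← hLmap, h, Subgroup.map_bot])
  · exact Or.inr (by rw [← hLmap, h])

end MinimalNormal

section Nilpotent

lemma Group.isNilpotent_of_center_sup_eq_top {G : Type*} [Group G] {M : Subgroup G}
    [Group.IsNilpotent M] (hM : Subgroup.center G ⊔ M = ⊤) : Group.IsNilpotent G := by
  set π := QuotientGroup.mk' (Subgroup.center G)
  have hsurj : Function.Surjective (π.comp M.subtype) := by
    rw [← MonoidHom.range_eq_top, MonoidHom.range_comp, Subgroup.range_subtype, eq_top_iff]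
    calc ⊤ = (Subgroup.center G ⊔ M).map π := by
          rw [hM, Subgroup.map_top_of_surjective π (QuotientGroup.mk'_surjective _)]
      _ ≤ M.map π := by
          rw [Subgroup.map_sup, QuotientGroup.map_mk'_self, bot_sup_eq]
  have := Group.nilpotent_of_surjective _ hsurj
  exact Subgroup.isNilpotent_of_ker_le_center π (QuotientGroup.ker_mk' _).le

theorem Group.isNilpotent_of_frattini_eq_bot_of_isMinimalNormal_le_center
    {G : Type*} [Group G] [Finite G] (hΦ : frattini G = ⊥)
    (hZ : ∀ N : Subgroup G, IsMinimalNormal N → N ≤ Subgroup.center G) :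
    Group.IsNilpotent G := by
  induction hcard : Nat.card G using Nat.strong_induction_on generalizing G with
  | _ n IH =>
    rcases subsingleton_or_nontrivial G with _ | _
    · infer_instance
    obtain ⟨N, hN⟩ := exists_isMinimalNormal (G := G)
    obtain ⟨M, hM, hNM⟩ := exists_isCoatom_not_le_of_not_le_frattini (N := N)
      (by rw [hΦ, le_bot_iff]; exact hN.2.1)
    have hZM : Subgroup.center G ⊔ M = ⊤ :=
      hM.2 _ (right_lt_sup.mpr fun h => hNM ((hZ N hN).trans h))
    have : M.Normal := normal_of_le_normalizer_of_center_sup_eq_top M.le_normalizer hZM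
    have hcard : Nat.card M < n := hcard ▸ lt_of_not_ge fun h => hM.1 (M.eq_top_of_le_card h)
    have hMZ (K : Subgroup M) (hK : IsMinimalNormal K) : K ≤ Subgroup.center M := fun k hk =>
      have hkZ := hZ _ (isMinimalNormal_map_subtype_of_center_sup_eq_top hZM hK)
        (Subgroup.mem_map_of_mem M.subtype hk)
      Subgroup.mem_center_iff.mpr fun m => Subtype.ext (Subgroup.mem_center_iff.mp hkZ m)
    have : Group.IsNilpotent M := IH _ hcard (frattini_eq_bot_of_normal hΦ M) hMZ rfl
    exact Group.isNilpotent_of_center_sup_eq_top hZM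

end Nilpotent

section Socle

variable {G : Type*} [Group G]

lemma IsCoatom.commutator_mem_of_normal {M : Subgroup G} (hM : IsCoatom M) [hMn : M.Normal]
    (a b : G) : a * b * a⁻¹ * b⁻¹ ∈ M := by
  by_cases ha : a ∈ M
  · rw [mul_assoc, mul_assoc]
    exact M.mul_mem ha (by simpa [mul_assoc] using hMn.conj_mem _ (M.inv_mem ha) b)
  have hsup : M ⊔ Subgroup.zpowers a = ⊤ :=
    hM.2 _ (left_lt_sup.mpr fun h => ha (h (Subgroup.mem_zpowers a)))
  obtain ⟨m, hm, _, ⟨k, rfl⟩, rfl⟩ :=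
    Subgroup.mem_sup_of_normal_left.mp (hsup ▸ Subgroup.mem_top b)
  have : a * (m * a ^ k) * a⁻¹ * (m * a ^ k)⁻¹ = (a * m * a⁻¹) * m⁻¹ := by group
  rw [this]
  exact M.mul_mem (hMn.conj_mem m hm a) (M.inv_mem hm)

lemma le_center_of_forall_isCoatom_not_normal_le {N : Subgroup G} [hN : N.Normal]
    (hΦ : frattini G = ⊥) (hNM : ∀ M : Subgroup G, IsCoatom M → ¬ M.Normal → N ≤ M) :
    N ≤ Subgroup.center G := by
  intro n hn
  refine Subgroup.mem_center_iff.mpr fun g => ?_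
  have hcomm : g * n * g⁻¹ * n⁻¹ ∈ frattini G := by
    refine mem_frattini_iff.mpr fun M hM => ?_
    by_cases hMn : M.Normal
    · exact hM.commutator_mem_of_normal g n
    · exact hNM M hM hMn (N.mul_mem (hN.conj_mem n hn g) (N.inv_mem hn))
  rw [hΦ, Subgroup.mem_bot, mul_inv_eq_one, mul_inv_eq_iff_eq_mul] at hcomm
  exact hcomm

lemma exists_isCoatom_not_normal_not_socle_le [Finite G] (hΦ : frattini G = ⊥)
    (hG : ¬ Group.IsNilpotent G) :
    ∃ M : Subgroup G, IsCoatom M ∧ ¬ M.Normal ∧ ¬ socle' G ≤ M := by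
  by_contra! h
  refine hG (Group.isNilpotent_of_frattini_eq_bot_of_isMinimalNormal_le_center hΦ
    fun N hN => ?_)
  have := hN.1
  have hNs : N ≤ socle' G := le_sSup (show N ∈ {N : Subgroup G | IsMinimalNormal N} from hN)
  exact le_center_of_forall_isCoatom_not_normal_le hΦ fun M hM hMn => hNs.trans (h M hM hMn)

end Socle

theorem exists_abnormal_maximal_not_containing_ftilde
    (G : Type*) [Group G] [Finite G] (h : ¬ Group.IsNilpotent G) :
    ∃ M : Subgroup G, IsCoatom M ∧ IsAbnormal M ∧ ¬ Ftilde G ≤ M := by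
  set π := QuotientGroup.mk' (frattini G)
  have hπ : Function.Surjective π := QuotientGroup.mk'_surjective _
  obtain ⟨M, hM, hMn, hMs⟩ := exists_isCoatom_not_normal_not_socle_le
    frattini_quotient_frattini_eq_bot (mt Group.IsNilpotent.of_quotient_frattini h)
  have hM' : IsCoatom (M.comap π) := Subgroup.isCoatom_comap_of_surjective hπ hM
  refine ⟨M.comap π, hM', hM'.isAbnormal_of_not_normal fun hn => hMn ?_,
    fun hle => hMs ((Subgroup.comap_le_comap_of_surjective hπ).mp hle)⟩
  simpa only [Subgroup.map_comap_eq_self_of_surjective hπ] using hn.map π hπ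
end

section
/- A finite group G is supersoluble if and only if G = A·B, where A and B are supersoluble F(G)-conjugate-permutable subgroups of G, and the commutator subgroup G' of G is nilpotent. -/
open scoped Pointwise

/-!
For the forward direction take `A = B = G`: the commutator subgroup centralises every cyclic
factor of a normal series with cyclic factors, hence it is nilpotent.

For the converse, `G' ≤ F(G)`, so `A` and `B` are `G'`-conjugate-permutable, and all hypotheses
pass to quotients; by induction on `|G|` it suffices to find a nontrivial normal cyclic subgroup.
Let `N ≤ G'` be a minimal normal subgroup. Nilpotency of `G'` gives `[N, G'] = 1`, so conjugation
by any `a ∈ G` commutes on `N` with conjugation by `G`, and `{n ∈ N | n ^ a = n ^ k}` is a normal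
subgroup, hence `1` or `N`. If `a ∈ A` fixes no nontrivial element of `N`, then `n ↦ [a, n]` is a
permutation of `N` that preserves the subgroup `A A^x` (`x ∈ N`), which forces `x ∈ A`; so
`N ≤ A`, supersolubility of `A` gives an `A`-invariant cyclic `1 ≠ ⟨v⟩ ≤ N`, and `a` acts on `N`
as the power map it induces on `v`. Thus every element of `A`, of `B`, hence of `G = AB` acts on
`N` as a power map, and every cyclic subgroup of `N` is normal in `G`.
-/

open Subgroup
open scoped commutatorElement

theorem Fin.exists_not_castSucc_and_succ {n : ℕ} {p : Fin (n + 1) → Prop} (h0 : ¬p 0)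
    (hlast : p (Fin.last n)) : ∃ i : Fin n, ¬p i.castSucc ∧ p i.succ := by
  induction n with
  | zero => exact absurd hlast h0
  | succ n ih =>
    by_cases hp : p (Fin.last n).castSucc
    · obtain ⟨i, hi⟩ := ih (p := fun j => p j.castSucc) h0 hp
      exact ⟨i.castSucc, hi⟩
    · exact ⟨Fin.last n, hp, hlast⟩

theorem Subgroup.comap_sup_zpowers_le {G H : Type*} [Group G] [Group H] {f : G →* H}
    (hf : Function.Surjective f) (X : Subgroup H) (g : G) :
    (X ⊔ zpowers (f g)).comap f ≤ X.comap f ⊔ zpowers g := by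
  rw [← comap_sup_eq _ _ _ hf, ← f.map_zpowers, comap_map_eq]
  exact sup_le le_sup_left (sup_le le_sup_right (f.ker_le_comap X |>.trans le_sup_left))

section CyclicFactor

variable {G : Type*} [Group G]

theorem commutator_le_centralizer_of_isCyclic (W : Subgroup G) [W.Normal] [IsCyclic W] :
    commutator G ≤ centralizer W := by
  let f := (IsCyclic.mulAutMulEquiv W).toMonoidHom.comp (MulAut.conjNormal (G := G) (H := W))
  refine (Abelianization.commutator_subset_ker f).trans fun g hg => ?_
  have hg : MulAut.conjNormal (H := W) g = 1 := by
    simpa [f, MonoidHom.mem_ker] using hg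
  rw [mem_centralizer_iff]
  intro w hw
  have := congrArg Subtype.val (DFunLike.congr_fun hg ⟨w, hw⟩)
  simp only [MulAut.conjNormal_apply, MulAut.one_apply] at this
  exact (mul_inv_eq_iff_eq_mul.1 this).symm

theorem isCyclic_map_mk_of_le_sup_zpowers {X Y : Subgroup G} [X.Normal] {g : G}
    (hY : Y ≤ X ⊔ zpowers g) : IsCyclic (Y.map (QuotientGroup.mk' X)) := by
  refine isCyclic_of_le (H' := zpowers (QuotientGroup.mk' X g)) ?_
  refine (map_mono hY).trans_eq ?_
  rw [Subgroup.map_sup, MonoidHom.map_zpowers, QuotientGroup.map_mk'_self, bot_sup_eq]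

theorem commutator_commutator_le_of_le_sup_zpowers {X Y : Subgroup G} [X.Normal]
    [Y.Normal] {g : G} (hY : Y ≤ X ⊔ zpowers g) : ⁅commutator G, Y⁆ ≤ X := by
  have := isCyclic_map_mk_of_le_sup_zpowers hY
  have := (inferInstance : Y.Normal).map _ (QuotientGroup.mk'_surjective X)
  rw [← QuotientGroup.ker_mk' X, ← Subgroup.map_eq_bot_iff, map_commutator, _root_.commutator_def,
    map_commutator, map_top_of_surjective _ (QuotientGroup.mk'_surjective X),
    commutator_eq_bot_iff_le_centralizer, ← _root_.commutator_def]
  exact commutator_le_centralizer_of_isCyclic _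

end CyclicFactor

namespace IsSupersoluble

variable {G H : Type*} [Group G] [Group H]

theorem of_subsingleton [Subsingleton G] : IsSupersoluble G :=
  ⟨0, fun _ => ⊥, monotone_const, rfl, Subsingleton.elim _ _, fun _ => inferInstance, Fin.elim0⟩

theorem of_surjective (h : IsSupersoluble G) (f : G →* H) (hf : Function.Surjective f) :
    IsSupersoluble H := by
  obtain ⟨n, s, hmono, h0, hlast, hnorm, hcyc⟩ := h
  refine ⟨n, fun i => (s i).map f, fun i j hij => map_mono (hmono hij), by simp [h0],
    by simp [hlast, map_top_of_surjective f hf], fun i => (hnorm i).map f hf, fun i => ?_⟩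
  obtain ⟨g, hg⟩ := hcyc i
  exact ⟨f g, (map_mono hg).trans_eq (by rw [Subgroup.map_sup, f.map_zpowers])⟩

theorem of_quotient_zpowers (x : G) [(zpowers x).Normal]
    (h : IsSupersoluble (G ⧸ zpowers x)) : IsSupersoluble G := by
  obtain ⟨n, s, hmono, h0, hlast, hnorm, hcyc⟩ := h
  set f := QuotientGroup.mk' (zpowers x)
  have hf : Function.Surjective f := QuotientGroup.mk'_surjective _
  refine ⟨n + 1, Matrix.vecCons ⊥ fun i => (s i).comap f,
    monotone_vecCons.2 ⟨bot_le, fun i j hij => comap_mono (hmono hij)⟩, rfl,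
    by simp [← Fin.succ_last, hlast], fun i => Fin.cases (by simp [normal_bot])
      (fun i => by simpa using (hnorm i).comap f) i,
    fun i => Fin.cases ⟨x, ?_⟩ (fun j => ?_) i⟩
  · simp [h0, f, QuotientGroup.ker_mk']
  · obtain ⟨q, hq⟩ := hcyc j
    obtain ⟨g, rfl⟩ := hf q
    exact ⟨g, by simpa using (comap_mono hq).trans (comap_sup_zpowers_le hf _ g)⟩

theorem exists_normal_zpowers_le (h : IsSupersoluble G) {M : Subgroup G} [M.Normal]
    (hM : M ≠ ⊥) : ∃ v ∈ M, v ≠ 1 ∧ (zpowers v).Normal := by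
  obtain ⟨n, s, -, h0, hlast, hnorm, hcyc⟩ := h
  obtain ⟨i, hbelow, hP⟩ := Fin.exists_not_castSucc_and_succ (p := fun i => s i ⊓ M ≠ ⊥)
    (by simp [h0]) (by simpa [hlast])
  obtain ⟨g, hg⟩ := hcyc i
  have := hnorm i.castSucc
  have := hnorm i.succ
  set f := QuotientGroup.mk' (s i.castSucc)
  have := isCyclic_map_mk_of_le_sup_zpowers hg
  -- `s i.succ ⊓ M` meets `s i.castSucc` trivially, so it embeds in the cyclic factor.
  have hinj : Function.Injective (f.subgroupMap (s i.succ ⊓ M)) := by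
    rw [← MonoidHom.ker_eq_bot_iff, eq_bot_iff]
    rintro ⟨p, hp⟩ hpf
    have hpX : p ∈ s i.castSucc := by
      simpa [f, MonoidHom.mem_ker, Subtype.ext_iff] using hpf
    have : p ∈ s i.castSucc ⊓ M := ⟨hpX, hp.2⟩
    rw [not_not.1 hbelow] at this
    simpa [Subtype.ext_iff] using this
  have := isCyclic_of_le (map_mono (f := f) (inf_le_left : s i.succ ⊓ M ≤ _))
  obtain ⟨v, hv⟩ := (Subgroup.isCyclic_iff_exists_zpowers_eq_top _).1 (isCyclic_of_injective _ hinj)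
  refine ⟨v, (hv ▸ mem_zpowers v : v ∈ s i.succ ⊓ M).2, ?_, hv ▸ inferInstance⟩
  rintro rfl
  exact hP (by rw [← hv, zpowers_one_eq_bot])

theorem isNilpotent_commutator (h : IsSupersoluble G) : Group.IsNilpotent (commutator G) := by
  obtain ⟨n, s, -, h0, hlast, hnorm, hcyc⟩ := h
  have hle : ∀ i : Fin (n + 1), (s i).subgroupOf (commutator G) ≤
      Subgroup.upperCentralSeries (commutator G) i := by
    refine Fin.induction (by simp [h0]) fun i ih x hx => ?_
    obtain ⟨g, hg⟩ := hcyc i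
    have := hnorm i.castSucc
    have := hnorm i.succ
    rw [Fin.val_succ, Subgroup.mem_upperCentralSeries_succ_iff]
    refine fun y => ih ?_
    rw [mem_subgroupOf, show ((⁅x, y⁆ : commutator G) : G) = ⁅(x : G), (y : G)⁆ from
      map_commutatorElement (commutator G).subtype x y]
    refine commutator_commutator_le_of_le_sup_zpowers hg ?_
    rw [commutator_comm]
    exact commutator_mem_commutator hx y.2
  exact ⟨n, eq_top_iff.2 (by simpa [hlast] using hle (Fin.last n))⟩

end IsSupersoluble

section Quotient

variable {G H : Type*} [Group G] [Group H]

theorem conjS_map (f : G →* H) (x : G) (A : Subgroup G) :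
    conjS (f x) (A.map f) = (conjS x A).map f := by
  simp only [conjS, map_map]
  congr 1
  ext
  simp

theorem IsRCP.map {R : Set G} {A : Subgroup G} (h : IsRCP R A) (f : G →* H) :
    IsRCP (f '' R) (A.map f) := by
  rintro _ ⟨r, hr, rfl⟩
  rw [conjS_map, coe_map, coe_map, ← Set.image_mul, h r hr, Set.image_mul]

theorem isRCP_top (R : Set G) : IsRCP R (⊤ : Subgroup G) := fun x _ => by
  rw [conjS, map_top_of_surjective _ (MulAut.conj x⁻¹).surjective]

theorem map_commutator_of_surjective {f : G →* H} (hf : Function.Surjective f) :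
    (commutator G).map f = commutator H := by
  rw [_root_.commutator_def, map_commutator, map_top_of_surjective f hf, _root_.commutator_def]

theorem Subgroup.card_quotient_lt [Finite G] {K : Subgroup G} (hK : K ≠ ⊥) :
    Nat.card (G ⧸ K) < Nat.card G := by
  rw [← index, ← index_bot]
  exact index_strictAnti (bot_lt_iff_ne_bot.2 hK)

end Quotient

section Permutable

variable {G : Type*} [Group G]

theorem Subgroup.coe_sup_of_mul_comm {H K : Subgroup G} (h : (H : Set G) * K = K * H) :
    ((H ⊔ K : Subgroup G) : Set G) = H * K := by
  have hmul : (H : Set G) * K * (H * K) = H * K := by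
    rw [mul_assoc, ← mul_assoc (K : Set G), ← h, mul_assoc, coe_mul_coe, ← mul_assoc,
      coe_mul_coe]
  let S : Subgroup G :=
    { carrier := H * K
      one_mem' := ⟨1, H.one_mem, 1, K.one_mem, mul_one 1⟩
      mul_mem' := fun ha hb => hmul ▸ Set.mul_mem_mul ha hb
      inv_mem' := fun {a} ha => by
        rw [h, ← Set.inv_mem_inv, DivisionMonoid.mul_inv_rev, inv_coe_set,
          inv_coe_set, inv_inv]
        exact ha }
  refine Set.Subset.antisymm (sup_le (fun a ha => ⟨a, ha, 1, K.one_mem, mul_one a⟩)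
    (fun b hb => ⟨1, H.one_mem, b, hb, one_mul b⟩) : H ⊔ K ≤ S) ?_
  rintro _ ⟨a, ha, b, hb, rfl⟩
  exact mul_mem_sup ha hb

theorem mem_of_mem_mul_conjS {A : Subgroup G} {x : G} (hx : x ∈ (A : Set G) * conjS x A) :
    x ∈ A := by
  obtain ⟨a₁, ha₁, _, ⟨a₂, ha₂, rfl⟩, hx⟩ := hx
  have : x = a₂ * a₁ := by
    simp only [MulEquiv.coe_toMonoidHom, MulAut.conj_apply, inv_inv] at hx
    have h1 : a₁ * x⁻¹ * a₂ = 1 := calc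
      a₁ * x⁻¹ * a₂ = a₁ * (x⁻¹ * a₂ * x) * x⁻¹ := by group
      _ = 1 := by rw [hx, mul_inv_cancel]
    calc x = a₂ * (a₁ * x⁻¹ * a₂)⁻¹ * a₁ := by group
      _ = a₂ * a₁ := by rw [h1, inv_one, mul_one]
  exact this ▸ A.mul_mem ha₂ ha₁

theorem mem_of_fixedPointFree_of_mul_conjS_comm [Finite G] {N A : Subgroup G} [N.Normal] {a x : G}
    (hfix : ∀ n ∈ N, a⁻¹ * n * a = n → n = 1) (ha : a ∈ A) (hx : x ∈ N)
    (hcomm : (A : Set G) * conjS x A = conjS x A * A) : x ∈ A := by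
  set S := A ⊔ conjS x A
  have haS : a ∈ S := mem_sup_left ha
  let φ : G → G := fun n => a⁻¹ * n⁻¹ * a * n
  have hinj : Set.InjOn φ N := by
    intro n hn m hm he
    have he' : n⁻¹ * a * n = m⁻¹ * a * m := by simpa [φ, mul_assoc] using he
    have : m * n⁻¹ = 1 := hfix _ (mul_mem hm (inv_mem hn)) <| calc
      a⁻¹ * (m * n⁻¹) * a = a⁻¹ * m * (n⁻¹ * a * n) * n⁻¹ := by group
      _ = a⁻¹ * m * (m⁻¹ * a * m) * n⁻¹ := by rw [he']
      _ = m * n⁻¹ := by group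
    exact (mul_inv_eq_one.1 this).symm
  have hmaps : Set.MapsTo φ ((S : Set G) ∩ N) ((S : Set G) ∩ N) := fun n ⟨hnS, hnN⟩ =>
    ⟨mul_mem (mul_mem (mul_mem (inv_mem haS) (inv_mem hnS)) haS) hnS,
      mul_mem (by simpa using Normal.conj_mem ‹_› _ (inv_mem hnN) a⁻¹) hnN⟩
  have hφx : φ x ∈ (S : Set G) ∩ N := by
    refine ⟨?_, mul_mem (by simpa using Normal.conj_mem ‹_› _ (inv_mem hx) a⁻¹) hx⟩
    have : x⁻¹ * a * x ∈ conjS x A := ⟨a, ha, by simp⟩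
    simpa [φ, mul_assoc] using mul_mem (inv_mem haS) (mem_sup_right this)
  have hbij := ((Set.toFinite _).injOn_iff_bijOn_of_mapsTo hmaps).1
    (hinj.mono Set.inter_subset_right)
  obtain ⟨y, ⟨hyS, hyN⟩, hyx⟩ := hbij.surjOn hφx
  have hxS : x ∈ S := hinj hyN hx hyx ▸ hyS
  rw [← SetLike.mem_coe, coe_sup_of_mul_comm hcomm] at hxS
  exact mem_of_mem_mul_conjS hxS

end Permutable

section MinimalNormal

variable {G : Type*} [Group G]

theorem Subgroup.eq_bot_of_commutator_eq_self {N H : Subgroup G} [Group.IsNilpotent H]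
    (hNH : N ≤ H) (h : ⁅N, H⁆ = N) : N = ⊥ := by
  obtain ⟨n, hn⟩ := (isNilpotent_iff_lowerCentralSeries H).1 ‹_›
  have hle : ∀ k, N ≤ H.lowerCentralSeries k := by
    intro k
    induction k with
    | zero => exact hNH
    | succ k ih => exact h ▸ commutator_mono ih le_rfl
  exact le_bot_iff.1 (hn ▸ hle n)

theorem exists_isMinimalNormal_le [Finite G] {M : Subgroup G} [M.Normal] (hM : M ≠ ⊥) :
    ∃ N, IsMinimalNormal N ∧ N ≤ M := by
  obtain ⟨N, hNM, hmin⟩ :=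
    exists_minimal_le_of_wellFoundedLT (fun K : Subgroup G => K.Normal ∧ K ≠ ⊥) M ⟨‹_›, hM⟩
  exact ⟨N, ⟨hmin.1.1, hmin.1.2, fun K hK hKN =>
    or_iff_not_imp_left.2 fun hK' => le_antisymm hKN (hmin.2 ⟨hK, hK'⟩ hKN)⟩, hNM⟩

theorem IsMinimalNormal.commutator_eq_bot {N H : Subgroup G} (hN : IsMinimalNormal N)
    [H.Normal] [Group.IsNilpotent H] (hNH : N ≤ H) : ⁅N, H⁆ = ⊥ := by
  have := hN.1
  exact (hN.2.2 _ inferInstance (commutator_le_left N H)).resolve_right fun h =>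
    hN.2.1 (eq_bot_of_commutator_eq_self hNH h)

end MinimalNormal

section PowerAction

variable {G : Type*} [Group G]

def ConjIsZPowOn (N : Subgroup G) (g : G) : Prop :=
  ∃ k : ℤ, ∀ n ∈ N, g⁻¹ * n * g = n ^ k

theorem ConjIsZPowOn.mul {N : Subgroup G} {g h : G} (hg : ConjIsZPowOn N g)
    (hh : ConjIsZPowOn N h) : ConjIsZPowOn N (g * h) := by
  obtain ⟨k, hk⟩ := hg
  obtain ⟨l, hl⟩ := hh
  refine ⟨k * l, fun n hn => ?_⟩
  calc (g * h)⁻¹ * n * (g * h) = h⁻¹ * (g⁻¹ * n * g) * h := by group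
    _ = (h⁻¹ * n * h) ^ k := by rw [hk n hn]; simpa using (conj_zpow (a := h⁻¹)).symm
    _ = n ^ (k * l) := by rw [hl n hn, ← zpow_mul, mul_comm]

theorem zpowers_normal_of_forall_conjIsZPowOn {N : Subgroup G} (h : ∀ g, ConjIsZPowOn N g)
    {x : G} (hx : x ∈ N) : (zpowers x).Normal := by
  refine ⟨fun n hn g => ?_⟩
  obtain ⟨k, hk⟩ := h g⁻¹
  have := hk n (zpowers_le.2 hx hn)
  rw [inv_inv] at this
  exact this ▸ zpow_mem hn k

def conjZPowSubgroup (N : Subgroup G) (hN : N ≤ centralizer N) (a : G) (k : ℤ) :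
    Subgroup G where
  carrier := {n | n ∈ N ∧ a⁻¹ * n * a = n ^ k}
  one_mem' := ⟨N.one_mem, by simp⟩
  mul_mem' := fun {n m} ⟨hn, hnk⟩ ⟨hm, hmk⟩ => ⟨mul_mem hn hm, calc
    a⁻¹ * (n * m) * a = (a⁻¹ * n * a) * (a⁻¹ * m * a) := by group
    _ = (n * m) ^ k := by
      rw [hnk, hmk, (show Commute n m from mem_centralizer_iff.1 (hN hm) n hn).mul_zpow]⟩
  inv_mem' := fun {n} ⟨hn, hnk⟩ => ⟨inv_mem hn, calc
    a⁻¹ * n⁻¹ * a = (a⁻¹ * n * a)⁻¹ := by group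
    _ = n⁻¹ ^ k := by rw [hnk, inv_zpow]⟩

theorem conj_conj_comm_of_commutator_le_centralizer {N : Subgroup G} [N.Normal]
    (hG' : commutator G ≤ centralizer N) (a g : G) {n : G} (hn : n ∈ N) :
    a⁻¹ * (g * n * g⁻¹) * a = g * (a⁻¹ * n * a) * g⁻¹ := by
  have hc : ⁅g⁻¹, a⁻¹⁆ ∈ commutator G := commutator_mem_commutator (mem_top _) (mem_top _)
  have hm : a⁻¹ * n * a ∈ N := by simpa using Normal.conj_mem ‹_› n hn a⁻¹
  have hcomm := mem_centralizer_iff.1 (hG' hc) _ hm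
  calc a⁻¹ * (g * n * g⁻¹) * a = g * (⁅g⁻¹, a⁻¹⁆ * (a⁻¹ * n * a) * ⁅g⁻¹, a⁻¹⁆⁻¹) * g⁻¹ := by
        rw [commutatorElement_def]; group
    _ = g * (a⁻¹ * n * a) * g⁻¹ := by rw [← hcomm]; group

theorem conjZPowSubgroup_normal {N : Subgroup G} [N.Normal] (hN : N ≤ centralizer N)
    (hG' : commutator G ≤ centralizer N) (a : G) (k : ℤ) :
    (conjZPowSubgroup N hN a k).Normal := by
  refine ⟨fun n ⟨hn, hnk⟩ g => ⟨Normal.conj_mem ‹_› n hn g, ?_⟩⟩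
  rw [conj_conj_comm_of_commutator_le_centralizer hG' a g hn, hnk, conj_zpow]

end PowerAction

section NormalCyclicSubgroup

variable {G : Type*} [Group G]

theorem conjIsZPowOn_of_isSupersoluble [Finite G] {N A : Subgroup G} (hN : IsMinimalNormal N)
    (hNG' : N ≤ commutator G) (hG'N : commutator G ≤ centralizer N) (hA : IsSupersoluble A)
    (hAc : IsRCP (commutator G) A) {a : G} (ha : a ∈ A) : ConjIsZPowOn N a := by
  have := hN.1
  have hNN : N ≤ centralizer N := hNG'.trans hG'N
  have hK : ∀ k, conjZPowSubgroup N hNN a k = ⊥ ∨ conjZPowSubgroup N hNN a k = N := fun k =>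
    hN.2.2 _ (conjZPowSubgroup_normal hNN hG'N a k) fun n hn => hn.1
  have of_ne_bot : ∀ k, conjZPowSubgroup N hNN a k ≠ ⊥ → ConjIsZPowOn N a := fun k hk =>
    ⟨k, fun n hn => by rw [← (hK k).resolve_left hk] at hn; exact hn.2⟩
  by_cases h1 : conjZPowSubgroup N hNN a 1 ≠ ⊥
  · exact of_ne_bot 1 h1
  -- `a` acts fixed-point-freely on `N`, which forces `N ≤ A`.
  have hfix : ∀ n ∈ N, a⁻¹ * n * a = n → n = 1 := fun n hn hna => by
    have : n ∈ conjZPowSubgroup N hNN a 1 := ⟨hn, by rwa [zpow_one]⟩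
    rwa [not_not.1 h1, mem_bot] at this
  have hNA : N ≤ A := fun x hx =>
    mem_of_fixedPointFree_of_mul_conjS_comm hfix ha hx (hAc x (hNG' hx))
  have := hN.1.subgroupOf A
  obtain ⟨v, hvN, hv1, hv⟩ := hA.exists_normal_zpowers_le (M := N.subgroupOf A)
    (subgroupOf_eq_bot.not.2 ((disjoint_of_le_iff_left_eq_bot hNA).not.2 hN.2.1))
  obtain ⟨k, hk⟩ := hv.conj_mem v (mem_zpowers v) ⟨a, ha⟩⁻¹
  have hvk : (v : G) ∈ conjZPowSubgroup N hNN a k :=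
    ⟨hvN, by simpa using (congrArg Subtype.val hk).symm⟩
  refine of_ne_bot k fun hbot => hv1 ?_
  rw [hbot, mem_bot] at hvk
  exact Subtype.ext hvk

theorem exists_ne_one_zpowers_normal [Finite G] [Nontrivial G] {A B : Subgroup G}
    [Group.IsNilpotent (commutator G)] (hAB : (A : Set G) * (B : Set G) = Set.univ)
    (hA : IsSupersoluble A) (hB : IsSupersoluble B) (hAc : IsRCP (commutator G) A)
    (hBc : IsRCP (commutator G) B) : ∃ x : G, x ≠ 1 ∧ (zpowers x).Normal := by
  by_cases hG' : commutator G = ⊥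
  · have hcomm : ∀ g h : G, g * h = h * g := fun g h => by
      have := commutator_mem_commutator (mem_top g) (mem_top h)
      rwa [← _root_.commutator_def, hG', mem_bot, commutatorElement_eq_one_iff_mul_comm] at this
    obtain ⟨x, hx⟩ := exists_ne (1 : G)
    exact ⟨x, hx, ⟨fun n hn g => by rwa [hcomm g n, mul_inv_cancel_right]⟩⟩
  obtain ⟨N, hN, hNG'⟩ := exists_isMinimalNormal_le hG'
  have hG'N : commutator G ≤ centralizer N :=
    le_centralizer_iff.1 (commutator_eq_bot_iff_le_centralizer.1 (hN.commutator_eq_bot hNG'))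
  have hpow : ∀ g, ConjIsZPowOn N g := fun g => by
    obtain ⟨a, ha, b, hb, rfl⟩ : g ∈ (A : Set G) * B := hAB ▸ Set.mem_univ g
    exact (conjIsZPowOn_of_isSupersoluble hN hNG' hG'N hA hAc ha).mul
      (conjIsZPowOn_of_isSupersoluble hN hNG' hG'N hB hBc hb)
  obtain ⟨x, hxN, hx1⟩ := (bot_or_exists_ne_one N).resolve_left hN.2.1
  exact ⟨x, hx1, zpowers_normal_of_forall_conjIsZPowOn hpow hxN⟩

end NormalCyclicSubgroup

theorem isSupersoluble_of_mul_eq_univ {G : Type*} [Group G] [Finite G] {A B : Subgroup G}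
    (hG' : Group.IsNilpotent (commutator G)) (hAB : (A : Set G) * (B : Set G) = Set.univ)
    (hA : IsSupersoluble A) (hB : IsSupersoluble B) (hAc : IsRCP (commutator G) A)
    (hBc : IsRCP (commutator G) B) : IsSupersoluble G := by
  induction hn : Nat.card G using Nat.strong_induction_on generalizing G with
  | _ n ih =>
  cases subsingleton_or_nontrivial G
  · exact .of_subsingleton
  obtain ⟨x, hx1, hxn⟩ := exists_ne_one_zpowers_normal hAB hA hB hAc hBc
  set f := QuotientGroup.mk' (zpowers x)
  have hf : Function.Surjective f := QuotientGroup.mk'_surjective _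
  have hcomm := map_commutator_of_surjective hf
  refine .of_quotient_zpowers x (ih _ (hn ▸ card_quotient_lt (zpowers_ne_bot.2 hx1))
    (A := A.map f) (B := B.map f) ?_ ?_ (hA.of_surjective _ (f.subgroupMap_surjective A))
    (hB.of_surjective _ (f.subgroupMap_surjective B)) ?_ ?_ rfl)
  · exact hcomm ▸ Group.nilpotent_of_surjective _ (f.subgroupMap_surjective _)
  · rw [coe_map, coe_map, ← Set.image_mul, hAB, Set.image_univ_of_surjective hf]
  · exact hcomm ▸ coe_map f _ ▸ hAc.map f
  · exact hcomm ▸ coe_map f _ ▸ hBc.map f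

theorem supersoluble_iff_product_of_supersoluble_fitting_cp_nilpotent_commutator
    (G : Type*) [Group G] [Finite G] :
    IsSupersoluble G ↔
      ∃ A B : Subgroup G, (A : Set G) * (B : Set G) = Set.univ ∧
        IsSupersoluble ↥A ∧ IsSupersoluble ↥B ∧
        IsRCP (Fitting G : Set G) A ∧ IsRCP (Fitting G : Set G) B ∧
        Group.IsNilpotent (commutator G) := by
  constructor
  · intro h
    have hTop : IsSupersoluble (⊤ : Subgroup G) :=
      h.of_surjective (topEquiv (G := G)).symm.toMonoidHom topEquiv.symm.surjective
    exact ⟨⊤, ⊤, by simp, hTop, hTop, isRCP_top _, isRCP_top _, h.isNilpotent_commutator⟩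
  · rintro ⟨A, B, hAB, hA, hB, hAF, hBF, hG'⟩
    have hG'F : commutator G ≤ Fitting G := le_sSup ⟨inferInstance, hG'⟩
    exact isSupersoluble_of_mul_eq_univ hG' hAB hA hB (fun x hx => hAF x (hG'F hx))
      (fun x hx => hBF x (hG'F hx))
end
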